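/- Let G be a graph, E* ⊆ E(G) with g_G(E*) = r₀. If G₀ is a 2-connected subgraph of G with |V(G₀)| ≤ r₀ and |E(G₀) ∩ E*| = 1, then |V(G₀)| = r₀ and G₀ is an induced cycle of G of length r₀. -/

import Mathlib

open SimpleGraph

attribute [local instance] Classical.propDecidable

universe u
variable {V : Type u}

/-- `H` (on vertex set `V × Fin m`) is an `m`-fold cover of `G`. -/
def IsCover (G : SimpleGraph V) (m : ℕ) (H : SimpleGraph (V × Fin m)) : Prop :=
  (∀ (u : V) (i j : Fin m), i ≠ j → H.Adj (u, i) (u, j)) ∧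
  (∀ (u v : V) (i j : Fin m), u ≠ v → H.Adj (u, i) (v, j) → G.Adj u v) ∧
  (∀ (u v : V) (i j j' : Fin m), u ≠ v → H.Adj (u, i) (v, j) → H.Adj (u, i) (v, j') → j = j')

/-- A full cover: every matching between fibers over an edge is perfect. -/
def IsFullCover (G : SimpleGraph V) (m : ℕ) (H : SimpleGraph (V × Fin m)) : Prop :=
  IsCover G m H ∧ ∀ u v : V, G.Adj u v → ∀ i : Fin m, ∃ j : Fin m, H.Adj (u, i) (v, j)

/-- Number of ℋ-colorings (independent transversals) of a cover graph `H`. -/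
noncomputable def coverCount {m : ℕ} (H : SimpleGraph (V × Fin m)) : ℕ :=
  Nat.card {f : V → Fin m // ∀ u v : V, ¬ H.Adj (u, f u) (v, f v)}

/-- The DP color function. -/
noncomputable def PDP (G : SimpleGraph V) (m : ℕ) : ℕ :=
  sInf {n | ∃ H : SimpleGraph (V × Fin m), IsCover G m H ∧ n = coverCount H}

/-- Number of proper m-colorings, i.e. the chromatic polynomial evaluated at m. -/
noncomputable def properCount (G : SimpleGraph V) (m : ℕ) : ℕ :=
  Nat.card {f : V → Fin m // ∀ u v : V, G.Adj u v → f u ≠ f v}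

/-- Girth of an edge: length of a shortest cycle through `e` (∞ if none). -/
noncomputable def edgeGirth (G : SimpleGraph V) (e : Sym2 V) : ℕ∞ :=
  ⨅ (a : V) (p : G.Walk a a) (_ : p.IsCycle) (_ : e ∈ p.edges), (p.length : ℕ∞)

/-- Girth of an edge set `E₀`: length of a shortest cycle meeting `E₀` in an odd
number of edges (∞ if none). -/
noncomputable def setGirth (G : SimpleGraph V) (E₀ : Set (Sym2 V)) : ℕ∞ :=
  ⨅ (a : V) (p : G.Walk a a) (_ : p.IsCycle)
    (_ : Odd (p.edges.countP (fun e => e ∈ E₀))), (p.length : ℕ∞)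

/-- The canonical cover graph `H_{G,m}`. -/
def canonicalCover (G : SimpleGraph V) (m : ℕ) : SimpleGraph (V × Fin m) where
  Adj x y := (x.1 = y.1 ∧ x.2 ≠ y.2) ∨ (G.Adj x.1 y.1 ∧ x.2 = y.2)
  symm := by
    constructor
    rintro ⟨u, i⟩ ⟨v, j⟩ (⟨h1, h2⟩ | ⟨h1, h2⟩)
    · exact Or.inl ⟨h1.symm, h2.symm⟩
    · exact Or.inr ⟨h1.symm, h2.symm⟩
  loopless := by constructor; rintro ⟨u, i⟩ (⟨h1, h2⟩ | ⟨h1, h2⟩) <;> simp_all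

/-- `D` is an orientation of the edge set `E₀`. -/
def IsOrientation (D : Set (V × V)) (E₀ : Set (Sym2 V)) : Prop :=
  (∀ x ∈ D, s(x.1, x.2) ∈ E₀) ∧
  ∀ u v : V, s(u, v) ∈ E₀ → ((u, v) ∈ D ↔ (v, u) ∉ D)

/-- The directed edges `D` are balanced on the closed walk `p`. -/
noncomputable def BalancedOn {G : SimpleGraph V} (D : Set (V × V)) {a : V}
    (p : G.Walk a a) : Prop :=
  p.darts.countP (fun d => (d.fst, d.snd) ∈ D) =
    p.darts.countP (fun d => (d.snd, d.fst) ∈ D)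

/-- A DP-good graph. -/
def DPGood [Fintype V] (G : SimpleGraph V) : Prop :=
  G.Connected ∧
  ∃ T : SimpleGraph V, T ≤ G ∧ T.IsTree ∧
    ∃ (q : ℕ) (e : Fin q → Sym2 V),
      Function.Injective e ∧
      Set.range e = G.edgeSet \ T.edgeSet ∧
      (∀ i j : Fin q, i ≤ j → edgeGirth G (e i) ≤ edgeGirth G (e j)) ∧
      ∀ i : Fin q, ∃ g : ℕ, Odd g ∧ edgeGirth G (e i) = (g : ℕ∞) ∧
        ∃ (a : V) (C : G.Walk a a), C.IsCycle ∧ e i ∈ C.edges ∧ C.length = g ∧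
          ∀ f ∈ C.edges, f ∈ T.edgeSet ∪ {e j | j ≤ i}

/-!
The unique `E*`-edge `xy` of the 2-connected graph `G'` lies on a cycle `C` of `G'`, because
`G' - y` and `G' - x` join `x` and `y` through a third vertex without using `xy`. As `xy` is the
only `E*`-edge of `C`, we get `r₀ ≤ |C| ≤ |V(G')| ≤ r₀`, so `C` spans `G'`. Finally, a shortest
cycle with an odd number of `E*`-edges has no chord: a chord splits it into two shorter cycles
whose `E*`-counts add up to an odd number, so one of them is odd. Hence every edge of `G` between
vertices of `G'` is an edge of `C`.
-/

namespace SimpleGraph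

variable {G : SimpleGraph V}

lemma setGirth_le_length {E : Set (Sym2 V)} {a : V} {C : G.Walk a a} (hC : C.IsCycle)
    (hodd : Odd (C.edges.countP (· ∈ E))) : setGirth G E ≤ C.length :=
  iInf_le_of_le a <| iInf_le_of_le C <| iInf_le_of_le hC <| iInf_le _ hodd

namespace Walk

lemma two_le_length_of_ne_of_notMem_edges {u v : V} {p : G.Walk u v} (huv : u ≠ v)
    (h : s(u, v) ∉ p.edges) : 2 ≤ p.length := by
  match p with
  | nil => exact absurd rfl huv
  | cons _ nil => simp at h
  | cons _ (cons _ _) => simp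

lemma IsCycle.exists_shorter_odd_isCycle_of_chord {E : Set (Sym2 V)} {u v : V} {C : G.Walk u u}
    (hC : C.IsCycle) (hodd : Odd (C.edges.countP (· ∈ E))) (hv : v ∈ C.support)
    (huv : G.Adj u v) (hchord : s(u, v) ∉ C.edges) :
    ∃ (b : V) (D : G.Walk b b), D.IsCycle ∧ Odd (D.edges.countP (· ∈ E)) ∧
      D.length < C.length := by
  set P := C.takeUntil v hv
  set Q := C.dropUntil v hv
  have hPQ : P.append Q = C := C.take_spec hv
  have hedges : C.edges = P.edges ++ Q.edges := by rw [← hPQ, edges_append]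
  have hP : P.IsPath := hC.isPath_takeUntil hv
  have hQ : Q.IsPath :=
    IsCycle.isPath_of_append_right (p := P) (not_nil_of_ne huv.ne) (hPQ ▸ hC)
  have hPe : s(u, v) ∉ P.edges := fun h => hchord (hedges ▸ List.mem_append_left _ h)
  have hQe : s(u, v) ∉ Q.edges := fun h => hchord (hedges ▸ List.mem_append_right _ h)
  have hPlen : 2 ≤ P.length := two_le_length_of_ne_of_notMem_edges huv.ne hPe
  have hQlen : 2 ≤ Q.length :=
    two_le_length_of_ne_of_notMem_edges huv.ne.symm (by rwa [Sym2.eq_swap])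
  have hlen : C.length = P.length + Q.length := by rw [← hPQ, length_append]
  have hcount := hedges ▸ hodd
  rw [List.countP_append] at hcount
  have hD₁ : (cons huv.symm P).IsCycle :=
    (cons_isCycle_iff P huv.symm).mpr ⟨hP, by rwa [Sym2.eq_swap]⟩
  have hD₂ : (cons huv Q).IsCycle := (cons_isCycle_iff Q huv).mpr ⟨hQ, hQe⟩
  -- the two cycles share only the chord, which is counted twice
  have hparity : Odd ((cons huv.symm P).edges.countP (· ∈ E)) ∨
      Odd ((cons huv Q).edges.countP (· ∈ E)) := by
    simp only [edges_cons, List.countP_cons, Sym2.eq_swap (a := v)]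
    simp only [Nat.odd_iff] at hcount ⊢
    omega
  rcases hparity with hodd₁ | hodd₂
  · exact ⟨v, _, hD₁, hodd₁, by simp only [length_cons]; omega⟩
  · exact ⟨u, _, hD₂, hodd₂, by simp only [length_cons]; omega⟩

lemma IsCycle.mem_edges_of_adj_of_setGirth_eq {E : Set (Sym2 V)} {a u v : V} {C : G.Walk a a}
    (hC : C.IsCycle) (hodd : Odd (C.edges.countP (· ∈ E))) (hmin : setGirth G E = C.length)
    (hu : u ∈ C.support) (hv : v ∈ C.support) (huv : G.Adj u v) : s(u, v) ∈ C.edges := by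
  by_contra hchord
  have hperm := (C.rotate_edges u hu).perm
  obtain ⟨b, D, hD, hDodd, hDlen⟩ := (hC.rotate hu).exists_shorter_odd_isCycle_of_chord
    (hperm.countP_eq _ ▸ hodd) ((C.mem_support_rotate_iff u hu).mpr hv) huv
    (fun h => hchord (hperm.mem_iff.mp h))
  have hle := hmin ▸ setGirth_le_length hD hDodd
  rw [length_rotate] at hDlen
  exact absurd (ENat.natCast_le_natCast.mp hle) (by omega)

lemma IsCycle.ncard_support {a : V} {C : G.Walk a a} (hC : C.IsCycle) :
    {v | v ∈ C.support}.ncard = C.length := by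
  have htail : {v | v ∈ C.support} = {v | v ∈ C.support.tail} :=
    Set.ext fun v => ⟨fun hv => (C.mem_support_iff.mp hv).elim
      (· ▸ C.end_mem_tail_support hC.not_nil) id, List.mem_of_mem_tail⟩
  rw [htail, ← List.coe_toFinset, Set.ncard_coe_finset,
    List.toFinset_card_of_nodup hC.support_nodup, List.length_tail, length_support,
    Nat.add_sub_cancel]

lemma IsCycle.length_le_ncard_verts [Finite V] {a : V} {C : G.Walk a a} {H : G.Subgraph}
    (hC : C.IsCycle) (hle : C.toSubgraph ≤ H) : C.length ≤ H.verts.ncard :=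
  hC.ncard_support ▸ Set.ncard_le_ncard (C.verts_toSubgraph ▸ hle.1)

lemma edgeSet_eq_of_toSubgraph_le {u v : V} {p : G.Walk u v} {H : G.Subgraph}
    (hle : p.toSubgraph ≤ H) (hverts : H.verts ⊆ {w | w ∈ p.support})
    (hchordless : ∀ x y, x ∈ p.support → y ∈ p.support → G.Adj x y → s(x, y) ∈ p.edges) :
    H.edgeSet = p.edgeSet := by
  refine le_antisymm (fun e he => ?_) (p.edgeSet_toSubgraph ▸ Subgraph.edgeSet_mono hle)
  induction e using Sym2.ind with
  | h x y => exact hchordless x y (hverts he.fst_mem) (hverts he.snd_mem) (H.adj_sub he)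

lemma countP_edges_eq_one_of_edgeSet_inter_eq {E : Set (Sym2 V)} {H : G.Subgraph} {u v : V}
    {p : G.Walk u v} {e : Sym2 V} (hp : p.IsTrail) (hle : p.toSubgraph ≤ H)
    (he : H.edgeSet ∩ E = {e}) (hep : e ∈ p.edges) : p.edges.countP (· ∈ E) = 1 := by
  rw [← List.count_eq_one_of_mem hp.edges_nodup hep, List.count_eq_countP]
  refine List.countP_congr fun f hf => ?_
  have hunique : f ∈ E ↔ f = e := by
    rw [← Set.mem_singleton_iff (a := f), ← he]
    exact ⟨fun hfE => ⟨Subgraph.edgeSet_mono hle (p.edgeSet_toSubgraph ▸ hf), hfE⟩, And.right⟩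
  simpa using hunique

end Walk

namespace Subgraph

lemma reachable_deleteEdges_of_connected_deleteVerts {H : G.Subgraph} {v : V}
    (hconn : (H.deleteVerts {v}).coe.Connected) {e : Sym2 V} (he : v ∈ e) {a b : V}
    (ha : a ∈ H.verts) (hb : b ∈ H.verts) (hav : a ≠ v) (hbv : b ≠ v) :
    (H.spanningCoe.deleteEdges {e}).Reachable a b := by
  let φ : (H.deleteVerts {v}).coe →g H.spanningCoe.deleteEdges {e} :=
    { toFun := Subtype.val
      map_rel' := fun {z t} hzt => by
        obtain ⟨-, hz, -, ht, hadj⟩ := deleteVerts_adj.mp hzt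
        refine SimpleGraph.deleteEdges_adj.mpr ⟨hadj, fun hzte => ?_⟩
        rcases Sym2.mem_iff.mp (Set.mem_singleton_iff.mp hzte ▸ he) with h | h
        exacts [hz h.symm, ht h.symm] }
  exact (hconn.preconnected ⟨a, by simp [ha, hav]⟩ ⟨b, by simp [hb, hbv]⟩).map φ

lemma exists_isCycle_mem_edges_of_adj {H : G.Subgraph} {x y w : V} (hxy : H.Adj x y)
    (hx : (H.deleteVerts {x}).coe.Connected) (hy : (H.deleteVerts {y}).coe.Connected)
    (hw : w ∈ H.verts) (hwx : w ≠ x) (hwy : w ≠ y) :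
    ∃ (a : V) (C : G.Walk a a), C.IsCycle ∧ s(x, y) ∈ C.edges ∧ C.toSubgraph ≤ H := by
  have hreach : (H.spanningCoe.deleteEdges {s(x, y)}).Reachable x y :=
    (reachable_deleteEdges_of_connected_deleteVerts hy (Sym2.mem_mk_right x y) hxy.fst_mem hw
      hxy.ne hwy).trans
    (reachable_deleteEdges_of_connected_deleteVerts hx (Sym2.mem_mk_left x y) hw hxy.snd_mem
      hwx hxy.ne.symm)
  obtain ⟨a, C, hC, hxyC⟩ := adj_and_reachable_delete_edges_iff_exists_cycle.mp ⟨hxy, hreach⟩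
  have hC' := hC.mapLe H.spanningCoe_le
  refine ⟨a, _, hC', by rwa [Walk.edges_mapLe_eq_edges], ?_⟩
  rw [Walk.toSubgraph_le_iff hC'.not_nil, ← H.edgeSet_spanningCoe]
  intro e he
  exact C.edges_subset_edgeSet (by simpa [Walk.edgeSet, Walk.edges_mapLe_eq_edges] using he)

end Subgraph

end SimpleGraph

theorem two_connected_one_edge_is_cycle_general {V : Type} [Fintype V]
    (G : SimpleGraph V) (Estar : Set (Sym2 V))
    (r₀ : ℕ) (hr : setGirth G Estar = (r₀ : ℕ∞))
    (G' : G.Subgraph)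
    (h2conn : 3 ≤ Nat.card G'.verts ∧ G'.Connected ∧
      ∀ v ∈ G'.verts, ((G'.deleteVerts {v}).coe).Connected)
    (hcard : Nat.card G'.verts ≤ r₀)
    (hone : Nat.card ↥(G'.edgeSet ∩ Estar) = 1) :
    Nat.card G'.verts = r₀ ∧
    (∀ u v : V, u ∈ G'.verts → v ∈ G'.verts → G.Adj u v → G'.Adj u v) ∧
    ∃ (a : V) (p : G.Walk a a), p.IsCycle ∧ p.length = r₀ ∧
      G'.verts = {x | x ∈ p.support} ∧ G'.edgeSet = {e | e ∈ p.edges} := by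
  obtain ⟨hcard3, -, hdel⟩ := h2conn
  rw [Nat.card_coe_set_eq] at hcard3 hcard hone
  obtain ⟨e, he⟩ := Set.ncard_eq_one.mp hone
  induction e using Sym2.ind with | h x y => ?_
  have hxy : G'.Adj x y := (he ▸ rfl : s(x, y) ∈ G'.edgeSet ∩ Estar).1
  obtain ⟨w, hw, hwxy⟩ := Set.exists_mem_notMem_of_ncard_lt_ncard (s := {x, y})
    ((Set.ncard_pair hxy.ne).trans_lt hcard3)
  obtain ⟨hwx, hwy⟩ : w ≠ x ∧ w ≠ y := not_or.mp hwxy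
  obtain ⟨a, C, hC, hxyC, hCG'⟩ := Subgraph.exists_isCycle_mem_edges_of_adj hxy
    (hdel x hxy.fst_mem) (hdel y hxy.snd_mem) hw hwx hwy
  have hodd : Odd (C.edges.countP (· ∈ Estar)) :=
    Walk.countP_edges_eq_one_of_edgeSet_inter_eq hC.isTrail hCG' he hxyC ▸ odd_one
  have hlen : r₀ ≤ C.length := ENat.natCast_le_natCast.mp (hr ▸ setGirth_le_length hC hodd)
  have hle := hC.length_le_ncard_verts hCG'
  have hverts : G'.verts = {v | v ∈ C.support} := (Set.eq_of_subset_of_ncard_le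
    (C.verts_toSubgraph ▸ hCG'.1) (by rw [hC.ncard_support]; omega)).symm
  have hmin : setGirth G Estar = C.length := by rw [hr, Nat.cast_inj]; omega
  have hchordless : ∀ u v, u ∈ C.support → v ∈ C.support → G.Adj u v → s(u, v) ∈ C.edges :=
    fun _ _ => hC.mem_edges_of_adj_of_setGirth_eq hodd hmin
  have hedges := Walk.edgeSet_eq_of_toSubgraph_le hCG' hverts.subset hchordless
  rw [Nat.card_coe_set_eq]
  refine ⟨by omega, fun u v hu hv huv => ?_, a, C, hC, by omega, hverts, hedges⟩
  exact (hedges ▸ hchordless u v (hverts.subset hu) (hverts.subset hv) huv : s(u, v) ∈ G'.edgeSet)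

/-- a 2-connected subgraph with at most `r₀` vertices containing exactly
one edge of `E*` is an induced cycle of `G` of length `r₀ = g_G(E*)`. -/
theorem two_connected_one_edge_is_cycle {V : Type} [Fintype V] [DecidableEq V]
    (G : SimpleGraph V) (Estar : Set (Sym2 V))
    (r₀ : ℕ) (hr : setGirth G Estar = (r₀ : ℕ∞))
    (G' : G.Subgraph)
    (h2conn : 3 ≤ Nat.card G'.verts ∧ G'.Connected ∧
      ∀ v ∈ G'.verts, ((G'.deleteVerts {v}).coe).Connected)
    (hcard : Nat.card G'.verts ≤ r₀)
    (hone : Nat.card ↥(G'.edgeSet ∩ Estar) = 1) :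
    Nat.card G'.verts = r₀ ∧
    (∀ u v : V, u ∈ G'.verts → v ∈ G'.verts → G.Adj u v → G'.Adj u v) ∧
    ∃ (a : V) (p : G.Walk a a), p.IsCycle ∧ p.length = r₀ ∧
      G'.verts = {x | x ∈ p.support} ∧ G'.edgeSet = {e | e ∈ p.edges} :=
  two_connected_one_edge_is_cycle_general G Estar r₀ hr G' h2conn hcard hone
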